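/- Consider a stationary GARCH(1,1) step with Gaussian innovations: let ω > 0 and α, β ≥ 0, and let σ₀, ε₀, z₀, σ₁, ε₁, z₁ be real random variables on a probability space (Ω, μ) such that: σ₀ ≥ 0 and σ₁ ≥ 0; ε₀ and ε₁ are standard Gaussian N(0,1); ε₀ is independent of σ₀ and z₀ = σ₀ ε₀; ε₁ is independent of the pair (σ₀, z₀); σ₁² = ω + α z₀² + β σ₀² and z₁ = σ₁ ε₁; the pair (z₁, σ₁) has the same joint distribution as (z₀, σ₀) (stationarity); E[σ₀²] = 1; E[σ₀⁴] < ∞; and E[σ₀⁶] < ∞. Then 15α³ + 9α²β + 3αβ² + β³ < 1 and the stationary sixth moment satisfies E[z₀⁶] = 15 ( ω²(ω + 3α + 3β) + ω E[z₀⁴] (3α² + 2αβ + β²) ) / (1 − 15α³ − 9α²β − 3αβ² − β³). -/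

import Mathlib

/-!
Write `σ₁² = ω + σ₀² A` with `A = α ε₀² + β`. Since `σ₀` is independent of `ε₀`, the expectation
of `σ₁⁶ = (ω + σ₀² A)³` factorises into the products `E[σ₀^(2k)] E[A^k]`, `k ≤ 3`, and the
`E[A^k]` follow from the Gaussian moments `E[ε^(2k)] = (2k - 1)‼`, which come from integrating by
parts against the density. Stationarity turns this into `m₆ = K + c m₆` with `m₆ = E[σ₀⁶] ≥ 0`,
`K > 0` and `c = 15α³ + 9α²β + 3αβ² + β³`, which forces `c < 1` and determines `m₆`; finally
`E[z₀⁴] = 3 E[σ₀⁴]` and `E[z₀⁶] = 15 E[σ₀⁶]`.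
-/

open MeasureTheory ProbabilityTheory
open scoped NNReal Nat

section GaussianMoments

variable {v : ℝ≥0}

lemma integrable_pow_gaussianReal (m : ℝ) (v : ℝ≥0) (n : ℕ) :
    Integrable (fun x : ℝ => x ^ n) (gaussianReal m v) :=
  (memLp_id_gaussianReal n).integrable_norm_pow'.mono' (by fun_prop)
    (ae_of_all _ fun x => by simp [norm_pow])

lemma integrable_pow_mul_gaussianPDFReal (hv : v ≠ 0) (n : ℕ) :
    Integrable (fun x : ℝ => x ^ n * gaussianPDFReal 0 v x) := by
  have h := integrable_pow_gaussianReal 0 v n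
  rw [gaussianReal_of_var_ne_zero 0 hv, integrable_withDensity_iff_integrable_smul'
    (measurable_gaussianPDF 0 v) (ae_of_all _ fun _ => gaussianPDF_lt_top)] at h
  simpa [toReal_gaussianPDF, mul_comm] using h

lemma hasDerivAt_gaussianPDFReal_zero (v : ℝ≥0) (x : ℝ) :
    HasDerivAt (gaussianPDFReal 0 v) (-(x / v) * gaussianPDFReal 0 v x) x := by
  have h : HasDerivAt (fun y : ℝ => -y ^ 2 / (2 * v)) (-(x / v)) x :=
    ((hasDerivAt_pow 2 x).neg.div_const _).congr_deriv (by simp; ring)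
  rw [gaussianPDFReal_def]
  simp only [sub_zero]
  exact (h.exp.const_mul _).congr_deriv (by ring)

lemma integral_pow_add_two_gaussianReal (hv : v ≠ 0) (n : ℕ) :
    ∫ x, x ^ (n + 2) ∂gaussianReal 0 v = (n + 1) * v * ∫ x, x ^ n ∂gaussianReal 0 v := by
  simp only [integral_gaussianReal_eq_integral_smul hv, smul_eq_mul]
  have hderiv (x : ℝ) : HasDerivAt (fun y => y ^ (n + 1) * gaussianPDFReal 0 v y)
      ((n + 1) * (x ^ n * gaussianPDFReal 0 v x) - x ^ (n + 2) * gaussianPDFReal 0 v x / v) x := by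
    refine ((hasDerivAt_pow (n + 1) x).mul (hasDerivAt_gaussianPDFReal_zero v x)).congr_deriv ?_
    simp only [Nat.add_sub_cancel]; push_cast; ring
  have hint := integrable_pow_mul_gaussianPDFReal hv
  have h0 := integral_eq_zero_of_hasDerivAt_of_integrable hderiv
    (((hint n).const_mul _).sub ((hint (n + 2)).div_const _)) (hint (n + 1))
  rw [integral_sub ((hint n).const_mul _) ((hint (n + 2)).div_const _), integral_const_mul,
    integral_div, sub_eq_zero, eq_div_iff (NNReal.coe_ne_zero.2 hv)] at h0
  simp only [mul_comm (gaussianPDFReal 0 v _)]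
  linear_combination -h0

lemma integral_pow_two_mul_gaussianReal (hv : v ≠ 0) (k : ℕ) :
    ∫ x, x ^ (2 * k) ∂gaussianReal 0 v = (v : ℝ) ^ k * (2 * k - 1)‼ := by
  induction k with
  | zero => simp -- `2 * 0 - 1` truncates to `0`, and `0‼ = 1`
  | succ k ih =>
    rw [show 2 * (k + 1) = 2 * k + 2 by ring, integral_pow_add_two_gaussianReal hv, ih]
    rcases k with _ | k
    · simp
    · rw [show 2 * (k + 1) + 2 - 1 = 2 * k + 1 + 2 by omega,
        show 2 * (k + 1) - 1 = 2 * k + 1 by omega, Nat.doubleFactorial_add_two]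
      push_cast; ring

lemma integrable_eval_gaussianReal (p : Polynomial ℝ) (m : ℝ) (v : ℝ≥0) :
    Integrable (fun x => p.eval x) (gaussianReal m v) := by
  simp_rw [Polynomial.eval_eq_sum_range]
  exact integrable_finsetSum _ fun i _ => (integrable_pow_gaussianReal m v i).const_mul _

lemma integral_even_poly_gaussianReal (hv : v ≠ 0) (a b c d : ℝ) :
    ∫ x, a + b * x ^ 2 + c * x ^ 4 + d * x ^ 6 ∂gaussianReal 0 v =
      a + b * v + 3 * c * v ^ 2 + 15 * d * v ^ 3 := by
  have hint (n : ℕ) (e : ℝ) := (integrable_pow_gaussianReal 0 v n).const_mul e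
  have h2 := integral_pow_two_mul_gaussianReal hv 1
  have h4 := integral_pow_two_mul_gaussianReal hv 2
  have h6 := integral_pow_two_mul_gaussianReal hv 3
  norm_num [Nat.doubleFactorial] at h2 h4 h6
  rw [integral_add (((integrable_const a).fun_add (hint 2 b)).fun_add (hint 4 c)) (hint 6 d),
    integral_add ((integrable_const a).fun_add (hint 2 b)) (hint 4 c),
    integral_add (integrable_const a) (hint 2 b)]
  simp only [integral_const, probReal_univ, smul_eq_mul, one_mul, integral_const_mul, h2, h4, h6]
  ring

section GaussianSqMulAdd

variable (hv : v ≠ 0) (a b : ℝ)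
include hv

lemma integral_sq_mul_add_gaussianReal :
    ∫ x, a * x ^ 2 + b ∂gaussianReal 0 v = a * v + b := by
  calc ∫ x, a * x ^ 2 + b ∂gaussianReal 0 v
      = ∫ x, b + a * x ^ 2 + 0 * x ^ 4 + 0 * x ^ 6 ∂gaussianReal 0 v := by congr with x; ring
    _ = a * v + b := by rw [integral_even_poly_gaussianReal hv]; ring

lemma integral_sq_mul_add_sq_gaussianReal :
    ∫ x, (a * x ^ 2 + b) ^ 2 ∂gaussianReal 0 v = 3 * a ^ 2 * v ^ 2 + 2 * a * b * v + b ^ 2 := by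
  calc ∫ x, (a * x ^ 2 + b) ^ 2 ∂gaussianReal 0 v
      = ∫ x, b ^ 2 + 2 * a * b * x ^ 2 + a ^ 2 * x ^ 4 + 0 * x ^ 6 ∂gaussianReal 0 v := by
        congr with x; ring
    _ = _ := by rw [integral_even_poly_gaussianReal hv]; ring

lemma integral_sq_mul_add_pow_three_gaussianReal :
    ∫ x, (a * x ^ 2 + b) ^ 3 ∂gaussianReal 0 v =
      15 * a ^ 3 * v ^ 3 + 9 * a ^ 2 * b * v ^ 2 + 3 * a * b ^ 2 * v + b ^ 3 := by
  calc ∫ x, (a * x ^ 2 + b) ^ 3 ∂gaussianReal 0 v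
      = ∫ x, b ^ 3 + 3 * a * b ^ 2 * x ^ 2 + 3 * a ^ 2 * b * x ^ 4 + a ^ 3 * x ^ 6
          ∂gaussianReal 0 v := by
        congr with x; ring
    _ = _ := by rw [integral_even_poly_gaussianReal hv]; ring

end GaussianSqMulAdd

end GaussianMoments

section RandomVariables

variable {Ω : Type*} [MeasurableSpace Ω] {μ : Measure Ω}

lemma integral_mul_pow_two_mul_of_hasLaw_gaussianReal {X ε : Ω → ℝ} {v : ℝ≥0}
    (hε : HasLaw ε (gaussianReal 0 v) μ) (hv : v ≠ 0) (hXε : IndepFun X ε μ) (k : ℕ)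
    (hX : AEStronglyMeasurable (fun ω => X ω ^ (2 * k)) μ) :
    ∫ ω, (X ω * ε ω) ^ (2 * k) ∂μ = (∫ ω, X ω ^ (2 * k) ∂μ) * v ^ k * (2 * k - 1)‼ := by
  have hpow : IndepFun (fun ω => X ω ^ (2 * k)) (fun ω => ε ω ^ (2 * k)) μ :=
    hXε.comp (by fun_prop : Measurable fun x : ℝ => x ^ (2 * k))
      (by fun_prop : Measurable fun x : ℝ => x ^ (2 * k))
  have hεpow : ∫ ω, ε ω ^ (2 * k) ∂μ = ∫ x, x ^ (2 * k) ∂gaussianReal 0 v :=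
    hε.integral_comp (f := fun x => x ^ (2 * k)) (by fun_prop)
  simp_rw [mul_pow]
  rw [hpow.integral_fun_mul_eq_mul_integral hX (hε.aemeasurable.pow_const _).aestronglyMeasurable,
    hεpow, integral_pow_two_mul_gaussianReal hv, mul_assoc]

lemma ProbabilityTheory.HasLaw.integrable_eval_gaussianReal {ε : Ω → ℝ} {m : ℝ} {v : ℝ≥0}
    (hε : HasLaw ε (gaussianReal m v) μ) (p : Polynomial ℝ) :
    Integrable (fun ω => p.eval (ε ω)) μ :=
  (hε.map_eq ▸ _root_.integrable_eval_gaussianReal p m v).comp_aemeasurable hε.aemeasurable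

lemma integral_const_add_mul_pow_three_of_indepFun [IsProbabilityMeasure μ] {S A : Ω → ℝ} (w : ℝ)
    (hSA : IndepFun S A μ)
    (hS : ∀ k ≤ 3, Integrable (fun ω => S ω ^ k) μ)
    (hA : ∀ k ≤ 3, Integrable (fun ω => A ω ^ k) μ) :
    ∫ ω, (w + S ω * A ω) ^ 3 ∂μ =
      w ^ 3 + 3 * w ^ 2 * ((∫ ω, S ω ∂μ) * ∫ ω, A ω ∂μ) +
        3 * w * ((∫ ω, S ω ^ 2 ∂μ) * ∫ ω, A ω ^ 2 ∂μ) + (∫ ω, S ω ^ 3 ∂μ) * ∫ ω, A ω ^ 3 ∂μ := by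
  have hindep (k : ℕ) : IndepFun (fun ω => S ω ^ k) (fun ω => A ω ^ k) μ :=
    hSA.comp (measurable_id.pow_const k) (measurable_id.pow_const k)
  have hint (k : ℕ) (hk : k ≤ 3) : Integrable (fun ω => S ω ^ k * A ω ^ k) μ :=
    (hindep k).integrable_mul (hS k hk) (hA k hk)
  have hmul (k : ℕ) (hk : k ≤ 3) :
      ∫ ω, S ω ^ k * A ω ^ k ∂μ = (∫ ω, S ω ^ k ∂μ) * ∫ ω, A ω ^ k ∂μ :=
    (hindep k).integral_fun_mul_eq_mul_integral (hS k hk).aestronglyMeasurable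
      (hA k hk).aestronglyMeasurable
  have hexpand (ω : Ω) : (w + S ω * A ω) ^ 3 = w ^ 3 + (3 * w ^ 2 * (S ω ^ 1 * A ω ^ 1) +
      (3 * w * (S ω ^ 2 * A ω ^ 2) + S ω ^ 3 * A ω ^ 3)) := by ring
  simp_rw [hexpand]
  rw [integral_add (integrable_const _) (((hint 1 (by norm_num)).const_mul _).fun_add
      (((hint 2 (by norm_num)).const_mul _).fun_add (hint 3 le_rfl))),
    integral_add ((hint 1 (by norm_num)).const_mul _)
      (((hint 2 (by norm_num)).const_mul _).fun_add (hint 3 le_rfl)),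
    integral_add ((hint 2 (by norm_num)).const_mul _) (hint 3 le_rfl)]
  simp only [integral_const, probReal_univ, smul_eq_mul, one_mul, integral_const_mul]
  rw [hmul 1 (by norm_num), hmul 2 (by norm_num), hmul 3 le_rfl]
  simp only [pow_one]
  ring

lemma integral_pow_six_of_garch_step [IsProbabilityMeasure μ] {σ ε σ' : Ω → ℝ} (w α β : ℝ)
    (hε : HasLaw ε (gaussianReal 0 1) μ) (hσε : IndepFun σ ε μ)
    (hσ2 : Integrable (fun ω => σ ω ^ 2) μ) (hσ4 : Integrable (fun ω => σ ω ^ 4) μ)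
    (hσ6 : Integrable (fun ω => σ ω ^ 6) μ)
    (hσ' : ∀ ω, σ' ω ^ 2 = w + α * (σ ω * ε ω) ^ 2 + β * σ ω ^ 2) :
    ∫ ω, σ' ω ^ 6 ∂μ = w ^ 3 + 3 * w ^ 2 * (α + β) * (∫ ω, σ ω ^ 2 ∂μ) +
      3 * w * (3 * α ^ 2 + 2 * α * β + β ^ 2) * (∫ ω, σ ω ^ 4 ∂μ) +
      (15 * α ^ 3 + 9 * α ^ 2 * β + 3 * α * β ^ 2 + β ^ 3) * ∫ ω, σ ω ^ 6 ∂μ := by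
  have hS : ∀ k ≤ 3, Integrable (fun ω => (σ ω ^ 2) ^ k) μ := by
    intro k hk
    simp only [← pow_mul]
    interval_cases k
    exacts [by simp, hσ2, hσ4, hσ6]
  have hA : ∀ k ≤ 3, Integrable (fun ω => (α * ε ω ^ 2 + β) ^ k) μ := fun k _ => by
    convert hε.integrable_eval_gaussianReal ((.C α * .X ^ 2 + .C β) ^ k) using 2
    simp
  have hSA : IndepFun (fun ω => σ ω ^ 2) (fun ω => α * ε ω ^ 2 + β) μ :=
    hσε.comp (by fun_prop : Measurable fun x : ℝ => x ^ 2)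
      (by fun_prop : Measurable fun x : ℝ => α * x ^ 2 + β)
  have hA1 : ∫ ω, α * ε ω ^ 2 + β ∂μ = α + β := by
    simpa using (hε.integral_comp (f := fun x => α * x ^ 2 + β) (by fun_prop)).trans
      (integral_sq_mul_add_gaussianReal one_ne_zero α β)
  have hA2 : ∫ ω, (α * ε ω ^ 2 + β) ^ 2 ∂μ = 3 * α ^ 2 + 2 * α * β + β ^ 2 := by
    simpa using (hε.integral_comp (f := fun x => (α * x ^ 2 + β) ^ 2) (by fun_prop)).trans
      (integral_sq_mul_add_sq_gaussianReal one_ne_zero α β)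
  have hA3 : ∫ ω, (α * ε ω ^ 2 + β) ^ 3 ∂μ =
      15 * α ^ 3 + 9 * α ^ 2 * β + 3 * α * β ^ 2 + β ^ 3 := by
    simpa using (hε.integral_comp (f := fun x => (α * x ^ 2 + β) ^ 3) (by fun_prop)).trans
      (integral_sq_mul_add_pow_three_gaussianReal one_ne_zero α β)
  calc ∫ ω, σ' ω ^ 6 ∂μ = ∫ ω, (w + σ ω ^ 2 * (α * ε ω ^ 2 + β)) ^ 3 ∂μ := by
        congr with ω
        rw [show σ' ω ^ 6 = (σ' ω ^ 2) ^ 3 by ring, hσ' ω]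
        ring
    _ = _ := by
      rw [integral_const_add_mul_pow_three_of_indepFun w hSA hS hA, hA1, hA2, hA3]
      simp only [← pow_mul]
      ring

end RandomVariables

theorem garch_sixth_moment_general {Ω : Type*} [MeasurableSpace Ω]
    (μ : Measure Ω) [IsProbabilityMeasure μ]
    (w α β : ℝ) (hw : 0 < w) (hα : 0 ≤ α) (hβ : 0 ≤ β)
    (σ₀ ε₀ z₀ σ₁ z₁ : Ω → ℝ)
    (hε₀meas : Measurable ε₀)
    (hε₀law : Measure.map ε₀ μ = gaussianReal 0 1)
    (hindep₀ : IndepFun ε₀ σ₀ μ)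
    (hz₀ : z₀ = fun ω => σ₀ ω * ε₀ ω)
    (hσ₁ : ∀ ω, σ₁ ω ^ 2 = w + α * z₀ ω ^ 2 + β * σ₀ ω ^ 2)
    (hstat : IdentDistrib (fun ω => (z₁ ω, σ₁ ω)) (fun ω => (z₀ ω, σ₀ ω)) μ μ)
    (hvar : (∫ ω, σ₀ ω ^ 2 ∂μ) = 1)
    (hmom4 : Integrable (fun ω => σ₀ ω ^ 4) μ)
    (hmom6 : Integrable (fun ω => σ₀ ω ^ 6) μ) :
    15 * α ^ 3 + 9 * α ^ 2 * β + 3 * α * β ^ 2 + β ^ 3 < 1 ∧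
      (∫ ω, z₀ ω ^ 6 ∂μ) =
        15 * (w ^ 2 * (w + 3 * α + 3 * β) +
            w * (∫ ω, z₀ ω ^ 4 ∂μ) * (3 * α ^ 2 + 2 * α * β + β ^ 2)) /
          (1 - 15 * α ^ 3 - 9 * α ^ 2 * β - 3 * α * β ^ 2 - β ^ 3) := by
  have hε : HasLaw ε₀ (gaussianReal 0 1) μ := ⟨hε₀meas.aemeasurable, hε₀law⟩
  -- `E[σ₀²] = 1 ≠ 0`, while a non-integrable function has Bochner integral `0`
  have hσ₀sq : Integrable (fun ω => σ₀ ω ^ 2) μ := .of_integral_ne_zero (by simp [hvar])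
  have hrec := integral_pow_six_of_garch_step w α β hε hindep₀.symm hσ₀sq hmom4 hmom6
    (σ' := σ₁) (by simpa [hz₀] using hσ₁)
  have hstat6 : ∫ ω, σ₁ ω ^ 6 ∂μ = ∫ ω, σ₀ ω ^ 6 ∂μ :=
    (hstat.comp (measurable_snd.pow_const 6)).integral_eq
  rw [hstat6, hvar] at hrec
  have hz4 : ∫ ω, z₀ ω ^ 4 ∂μ = 3 * ∫ ω, σ₀ ω ^ 4 ∂μ := by
    simpa [hz₀, Nat.doubleFactorial, mul_comm] using integral_mul_pow_two_mul_of_hasLaw_gaussianReal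
      hε one_ne_zero hindep₀.symm 2 hmom4.aestronglyMeasurable
  have hz6 : ∫ ω, z₀ ω ^ 6 ∂μ = 15 * ∫ ω, σ₀ ω ^ 6 ∂μ := by
    simpa [hz₀, Nat.doubleFactorial, mul_comm] using integral_mul_pow_two_mul_of_hasLaw_gaussianReal
      hε one_ne_zero hindep₀.symm 3 hmom6.aestronglyMeasurable
  have hm6 : 0 ≤ ∫ ω, σ₀ ω ^ 6 ∂μ := by positivity
  have hK : 0 < w ^ 3 + 3 * w ^ 2 * (α + β) +
      3 * w * (3 * α ^ 2 + 2 * α * β + β ^ 2) * ∫ ω, σ₀ ω ^ 4 ∂μ := by positivity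
  have hc : 15 * α ^ 3 + 9 * α ^ 2 * β + 3 * α * β ^ 2 + β ^ 3 < 1 := by nlinarith
  refine ⟨hc, ?_⟩
  rw [hz4, hz6, eq_div_iff (by linarith)]
  linear_combination 15 * hrec

/-- Stationary sixth moment of a GARCH(1,1) process with Gaussian innovations:
under stationarity, unit variance and finite fourth and sixth moments of the volatility,
one has `15α³ + 9α²β + 3αβ² + β³ < 1` and
`E[z₀⁶] = 15(ω²(ω + 3α + 3β) + ω E[z₀⁴](3α² + 2αβ + β²)) / (1 − 15α³ − 9α²β − 3αβ² − β³)`. -/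
theorem garch_sixth_moment {Ω : Type*} [MeasurableSpace Ω]
    (μ : Measure Ω) [IsProbabilityMeasure μ]
    (w α β : ℝ) (hw : 0 < w) (hα : 0 ≤ α) (hβ : 0 ≤ β)
    (σ₀ ε₀ z₀ σ₁ ε₁ z₁ : Ω → ℝ)
    (hσ₀meas : Measurable σ₀) (hε₀meas : Measurable ε₀) (hσ₁meas : Measurable σ₁)
    (hε₁meas : Measurable ε₁)
    (hσ₀pos : ∀ ω, 0 ≤ σ₀ ω) (hσ₁pos : ∀ ω, 0 ≤ σ₁ ω)
    (hε₀law : Measure.map ε₀ μ = gaussianReal 0 1)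
    (hε₁law : Measure.map ε₁ μ = gaussianReal 0 1)
    (hindep₀ : IndepFun ε₀ σ₀ μ)
    (hz₀ : z₀ = fun ω => σ₀ ω * ε₀ ω)
    (hindep₁ : IndepFun ε₁ (fun ω => (σ₀ ω, z₀ ω)) μ)
    (hσ₁ : ∀ ω, σ₁ ω ^ 2 = w + α * z₀ ω ^ 2 + β * σ₀ ω ^ 2)
    (hz₁ : z₁ = fun ω => σ₁ ω * ε₁ ω)
    (hstat : IdentDistrib (fun ω => (z₁ ω, σ₁ ω)) (fun ω => (z₀ ω, σ₀ ω)) μ μ)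
    (hvar : (∫ ω, σ₀ ω ^ 2 ∂μ) = 1)
    (hmom4 : Integrable (fun ω => σ₀ ω ^ 4) μ)
    (hmom6 : Integrable (fun ω => σ₀ ω ^ 6) μ) :
    15 * α ^ 3 + 9 * α ^ 2 * β + 3 * α * β ^ 2 + β ^ 3 < 1 ∧
      (∫ ω, z₀ ω ^ 6 ∂μ) =
        15 * (w ^ 2 * (w + 3 * α + 3 * β) +
            w * (∫ ω, z₀ ω ^ 4 ∂μ) * (3 * α ^ 2 + 2 * α * β + β ^ 2)) /
          (1 - 15 * α ^ 3 - 9 * α ^ 2 * β - 3 * α * β ^ 2 - β ^ 3) :=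
  garch_sixth_moment_general μ w α β hw hα hβ σ₀ ε₀ z₀ σ₁ z₁ hε₀meas hε₀law hindep₀ hz₀ hσ₁ hstat
    hvar hmom4 hmom6
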